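/- arXiv:2012.01331 — 4 statements merged into one kernel-verified Lean document; each statement's English description precedes it below -/
import Mathlib

section
/- Let z > 0, λ > 0, and R ≥ 0 be real numbers with λ·(1+R) ≤ 1, and define F(γ) = λ/(1 + γz) + γ·(λ(1+R)·γ/(γ+z) − 1) for γ ≥ 0. Then F is strictly decreasing on [0, ∞). -/
/-! Splitting off the polynomial part of `c γ² / (γ + z)` gives
`γ (c γ / (γ + z) - 1) = (c - 1) γ - c z + c z² / (γ + z)`. For `0 ≤ c ≤ 1` each summand is
antitone in `γ ≥ 0`, while `λ / (1 + γ z)` is strictly antitone, so their sum `F` is strictly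
antitone. -/

open Set

theorem mul_mul_div_add_sub_one_eq (c γ z : ℝ) (h : γ + z ≠ 0) :
    γ * (c * γ / (γ + z) - 1) = (c - 1) * γ - c * z + c * z ^ 2 / (γ + z) := by
  field_simp
  ring

theorem strictAntiOn_div_one_add_mul {a z : ℝ} (ha : 0 < a) (hz : 0 < z) :
    StrictAntiOn (fun γ : ℝ => a / (1 + γ * z)) (Ici 0) := by
  intro γ (hγ : 0 ≤ γ) δ _ hγδ
  dsimp only
  gcongr

theorem antitoneOn_mul_mul_div_add_sub_one {c z : ℝ} (hc₀ : 0 ≤ c) (hc₁ : c ≤ 1) (hz : 0 < z) :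
    AntitoneOn (fun γ : ℝ => γ * (c * γ / (γ + z) - 1)) (Ici 0) := by
  intro γ (hγ : 0 ≤ γ) δ (hδ : 0 ≤ δ) hγδ
  dsimp only
  rw [mul_mul_div_add_sub_one_eq c γ z (by positivity),
    mul_mul_div_add_sub_one_eq c δ z (by positivity)]
  have hlin : (c - 1) * δ ≤ (c - 1) * γ := mul_le_mul_of_nonpos_left hγδ (by linarith)
  have hrec : c * z ^ 2 / (δ + z) ≤ c * z ^ 2 / (γ + z) := by gcongr
  linarith

/-- Monotonicity claim in the proof of Lemma `Suff`: under `λ(1+R) ≤ 1`, the function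
`F(γ) = λ/(1+γz) + γ(λ(1+R)γ/(γ+z) − 1)` is strictly decreasing on `[0, ∞)`. -/
theorem informativeness_F_strictAnti (z lam R : ℝ)
    (hz : 0 < z) (hlam : 0 < lam) (hR : 0 ≤ R) (hcost : lam * (1 + R) ≤ 1) :
    StrictAntiOn
      (fun gam : ℝ => lam / (1 + gam * z) + gam * (lam * (1 + R) * gam / (gam + z) - 1))
      (Set.Ici (0:ℝ)) :=
  (strictAntiOn_div_one_add_mul hlam hz).add_antitone
    (antitoneOn_mul_mul_div_add_sub_one (by positivity) hcost hz)
end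

section
/- Let z, λ, R be real numbers with 0 < z < λ, R ≥ 0, and λ·(1+R) ≤ 1. Then there exists p̄ ∈ (1/2, 1] such that for all p with p̄ ≤ p ≤ 1, setting γ = (1−p)/p, the inequality z − λ/(1 + γz) ≤ γ·(λ(1+R)·γ/(γ+z) − 1) holds. -/
/-!
At `p = 1` the signal is perfect, `γ = 0`, and the informativeness condition reads `z - λ ≤ 0`,
which holds strictly when `z < λ`. Both sides are continuous in `γ` near `0` (their denominators
are `1` and `z` there) and `γ = (1 - p) / p` is continuous at `p = 1`, so the strict inequality
persists on a left neighbourhood `[p̄, 1]` of `1`.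
-/

open Filter Set Topology

lemma exists_Ioc_forall_Icc_of_eventually_nhdsLE {α : Type*} [LinearOrder α] [TopologicalSpace α]
    [OrderTopology α] [DenselyOrdered α] {P : α → Prop} {a b : α} (hba : b < a)
    (h : ∀ᶠ x in 𝓝[≤] a, P x) : ∃ c ∈ Ioc b a, ∀ x, c ≤ x → x ≤ a → P x := by
  obtain ⟨l, hla, hsub⟩ := (mem_nhdsLE_iff_exists_Ioc_subset' hba).1 h
  obtain ⟨c, hlc, hca⟩ := exists_between (max_lt hla hba)
  exact ⟨c, ⟨(le_max_right l b).trans_lt hlc, hca.le⟩,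
    fun x hcx hxa => hsub ⟨(le_max_left l b).trans_lt (hlc.trans_le hcx), hxa⟩⟩

lemma tendsto_likelihoodRatio_nhds_one :
    Tendsto (fun p : ℝ => (1 - p) / p) (𝓝 1) (𝓝 0) := by
  have hcont : ContinuousAt (fun p : ℝ => (1 - p) / p) 1 := by fun_prop (disch := norm_num)
  simpa using hcont.tendsto

lemma eventually_informative_nhds_zero {z lam R : ℝ} (hz : z ≠ 0) (hzlam : z < lam) :
    ∀ᶠ γ in 𝓝 0, z - lam / (1 + γ * z) < γ * (lam * (1 + R) * γ / (γ + z) - 1) := by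
  have hlhs : ContinuousAt (fun γ : ℝ => z - lam / (1 + γ * z)) 0 := by
    fun_prop (disch := simp)
  have hrhs : ContinuousAt (fun γ : ℝ => γ * (lam * (1 + R) * γ / (γ + z) - 1)) 0 := by
    fun_prop (disch := simpa using hz)
  exact hlhs.tendsto.eventually_lt hrhs.tendsto (by simpa using hzlam)

theorem informativeness_for_accurate_signals_general (z lam R : ℝ)
    (hz : 0 < z) (hzlam : z < lam) :
    ∃ pbar ∈ Set.Ioc (1/2 : ℝ) 1, ∀ p : ℝ, pbar ≤ p → p ≤ 1 →
      z - lam / (1 + ((1 - p) / p) * z) ≤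
        ((1 - p) / p) * (lam * (1 + R) * ((1 - p) / p) / (((1 - p) / p) + z) - 1) := by
  have hnear : ∀ᶠ p in 𝓝[≤] (1 : ℝ), z - lam / (1 + ((1 - p) / p) * z) ≤
      ((1 - p) / p) * (lam * (1 + R) * ((1 - p) / p) / (((1 - p) / p) + z) - 1) :=
    nhdsWithin_le_nhds <| (tendsto_likelihoodRatio_nhds_one.eventually
      (eventually_informative_nhds_zero (R := R) hz.ne' hzlam)).mono fun _ h => h.le
  exact exists_Ioc_forall_Icc_of_eventually_nhdsLE (by norm_num) hnear

/-- Lemma `Suff`: if `z < λ` (and `λ(1+R) ≤ 1`), then the informativeness condition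
holds for all sufficiently accurate signals `p`, where `γ = (1−p)/p`. -/
theorem informativeness_for_accurate_signals (z lam R : ℝ)
    (hz : 0 < z) (hzlam : z < lam) (hR : 0 ≤ R) (hcost : lam * (1 + R) ≤ 1) :
    ∃ pbar ∈ Set.Ioc (1/2 : ℝ) 1, ∀ p : ℝ, pbar ≤ p → p ≤ 1 →
      z - lam / (1 + ((1 - p) / p) * z) ≤
        ((1 - p) / p) * (lam * (1 + R) * ((1 - p) / p) / (((1 - p) / p) + z) - 1) :=
  informativeness_for_accurate_signals_general z lam R hz hzlam
end

section
/- Let γ > 0 and let z, z', λ, λ', R, R' be real numbers with z ≥ z' > 0, 0 < λ ≤ λ', and 0 ≤ R ≤ R'. If z − λ/(1 + γz) ≤ γ·(λ(1+R)·γ/(γ+z) − 1), then z' − λ'/(1 + γz') ≤ γ·(λ'(1+R')·γ/(γ+z') − 1). -/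
/-!
The left-hand side `z - λ / (1 + γ z)` grows with `z` and shrinks as `λ` grows, while the
right-hand side `γ (λ (1 + R) γ / (γ + z) - 1)` shrinks as `z` grows and grows with `λ` and `R`.
So moving to `(z', λ', R')` can only lower the left side and raise the right side.
-/

noncomputable section

def informativenessLHS (γ z c : ℝ) : ℝ := z - c / (1 + γ * z)

def informativenessRHS (γ z c R : ℝ) : ℝ := γ * (c * (1 + R) * γ / (γ + z) - 1)

variable {γ z z' c c' R R' : ℝ}

theorem informativenessLHS_le (hγ : 0 ≤ γ) (hz' : 0 ≤ z') (hzz : z' ≤ z) (hc' : 0 ≤ c')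
    (hcc : c ≤ c') : informativenessLHS γ z' c' ≤ informativenessLHS γ z c := by
  unfold informativenessLHS
  gcongr

theorem informativenessRHS_le (hγ : 0 ≤ γ) (hz' : 0 < z') (hzz : z' ≤ z) (hc : 0 ≤ c)
    (hcc : c ≤ c') (hR : 0 ≤ 1 + R) (hRR : R ≤ R') :
    informativenessRHS γ z c R ≤ informativenessRHS γ z' c' R' := by
  unfold informativenessRHS
  have hR' : 0 ≤ 1 + R' := by linarith
  have hc' : 0 ≤ c' := hc.trans hcc
  gcongr

end

/-- Lemma `MON`: the informativeness condition is preserved when `λ` increases, `R`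
increases, or the prior likelihood ratio `z` decreases. -/
theorem informativeness_monotone (gam z z' lam lam' R R' : ℝ)
    (hgam : 0 < gam) (hz' : 0 < z') (hzz : z' ≤ z)
    (hlam : 0 < lam) (hll : lam ≤ lam') (hR : 0 ≤ R) (hRR : R ≤ R')
    (h : z - lam / (1 + gam * z) ≤ gam * (lam * (1 + R) * gam / (gam + z) - 1)) :
    z' - lam' / (1 + gam * z') ≤ gam * (lam' * (1 + R') * gam / (gam + z') - 1) :=
  calc informativenessLHS gam z' lam'
      ≤ informativenessLHS gam z lam :=
        informativenessLHS_le hgam.le hz'.le hzz (hlam.le.trans hll) hll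
    _ ≤ informativenessRHS gam z lam R := h
    _ ≤ informativenessRHS gam z' lam' R' :=
        informativenessRHS_le hgam.le hz' hzz hlam.le hll (by linarith) hRR
end

section
/- For d ≥ 0 and 0 < λ with 2λ(1+d) < 1, define R̲(λ, d) = (1 − λ − √(1 − 2(1+d)λ))/λ. Then R̲ is monotone increasing in each argument: whenever 0 < λ ≤ λ', 0 ≤ d ≤ d', and 2λ'(1+d') < 1, one has R̲(λ, d) ≤ R̲(λ', d'). -/
/-!
Rationalizing, `(1 - λ - √(1 - 2cλ)) / λ = 2c / (1 + √(1 - 2cλ)) - 1` with `c = 1 + d`.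
In this form the numerator grows with `c` and the denominator shrinks as `cλ` grows,
so the threshold is monotone in `(λ, d)` jointly.
-/

open Real

lemma one_sub_sub_sqrt_div_eq {c lam : ℝ} (hlam : lam ≠ 0) (h : 2 * c * lam ≤ 1) :
    (1 - lam - √(1 - 2 * c * lam)) / lam = 2 * c / (1 + √(1 - 2 * c * lam)) - 1 := by
  have hsq : √(1 - 2 * c * lam) ^ 2 = 1 - 2 * c * lam := sq_sqrt (by linarith)
  have hden : 0 < 1 + √(1 - 2 * c * lam) := by positivity
  rw [div_sub_one hden.ne', div_eq_div_iff hlam hden.ne']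
  linear_combination -hsq

lemma div_one_add_sqrt_le {c c' lam lam' : ℝ} (hc' : 0 ≤ c') (hcc : c ≤ c')
    (hprod : c * lam ≤ c' * lam') :
    2 * c / (1 + √(1 - 2 * c * lam)) ≤ 2 * c' / (1 + √(1 - 2 * c' * lam')) := by
  have hsqrt : √(1 - 2 * c' * lam') ≤ √(1 - 2 * c * lam) := sqrt_le_sqrt (by linarith)
  exact div_le_div₀ (by positivity) (by linarith) (by positivity) (by linarith)

/-- Claim in Proposition `Welfare` Part 3 (first half): the lower threshold
`R̲(λ,d) = (1 − λ − √(1 − 2(1+d)λ))/λ` is monotone increasing in `λ` and in `d`. -/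
theorem Rlow_monotone (lam lam' d d' : ℝ)
    (hlam : 0 < lam) (hll : lam ≤ lam') (hd : 0 ≤ d) (hdd : d ≤ d')
    (hdisc : 2 * lam' * (1 + d') < 1) :
    (1 - lam - Real.sqrt (1 - 2 * (1 + d) * lam)) / lam ≤
      (1 - lam' - Real.sqrt (1 - 2 * (1 + d') * lam')) / lam' := by
  have hprod : (1 + d) * lam ≤ (1 + d') * lam' :=
    mul_le_mul (by linarith) hll hlam.le (by linarith)
  rw [one_sub_sub_sqrt_div_eq hlam.ne' (by linarith),
    one_sub_sub_sqrt_div_eq (hlam.trans_le hll).ne' (by linarith)]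
  exact sub_le_sub_right (div_one_add_sqrt_le (by linarith) (by linarith) hprod) 1
end
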